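/- Let α ∈ (0,2) and β < α + 1. Then for every k > 0, lim_{h → ∞} h · ∫_{k√h}^∞ r · e^{β r}(e^r − 1)^{−(α+1)} dr = 0; equivalently, lim_{h → ∞} h^{3/2} ∫_k^∞ r · e^{β r √h}(e^{r√h} − 1)^{−(α+1)} dr = 0. (This is the vanishing of the centering correction outside a ball of fixed radius for the rescaled Lamperti stable Lévy measures, used in the long-time Brownian limit theorem.) -/

import Mathlib

/-!
With `c = (α + 1 - β) / 2 > 0`, the function `r ↦ r ℓ_{α,β}(r)` is nonnegative and bounded by
`C e^{-c r}` on `[1, ∞)`, because `e^r - 1 ≥ e^r / 2` there and `r ≤ c⁻¹ e^{c r}`. Its tail integral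
beyond `M` is therefore `O(e^{-c M})`, and at `M = k √h` this beats every power of `h`.
The substitution `u = r √h` turns `h^{3/2} ∫_k^∞ r ℓ(r √h) dr` into `√h ∫_{k√h}^∞ u ℓ(u) du`,
so both limits are instances of the same estimate.
-/

open MeasureTheory Set Filter Real Topology

noncomputable def lampertiDensity (α β r : ℝ) : ℝ :=
  exp (β * r) * (exp r - 1) ^ (-(α + 1))

lemma lampertiDensity_nonneg (α β : ℝ) {r : ℝ} (hr : 0 ≤ r) : 0 ≤ lampertiDensity α β r :=
  mul_nonneg (exp_pos _).le (rpow_nonneg (by linarith [add_one_le_exp r]) _)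

lemma rpow_sub_one_neg_le {x γ : ℝ} (hx : 2 ≤ x) (hγ : 0 ≤ γ) :
    (x - 1) ^ (-γ) ≤ 2 ^ γ * x ^ (-γ) :=
  calc (x - 1) ^ (-γ) ≤ (x / 2) ^ (-γ) :=
        rpow_le_rpow_of_nonpos (by positivity) (by linarith) (by linarith)
    _ = 2 ^ γ * x ^ (-γ) := by
        rw [div_rpow (by linarith) zero_le_two, rpow_neg zero_le_two, div_inv_eq_mul, mul_comm]

lemma le_inv_mul_exp_mul {c : ℝ} (hc : 0 < c) (r : ℝ) : r ≤ c⁻¹ * exp (c * r) := by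
  rw [le_inv_mul_iff₀ hc]
  linarith [add_one_le_exp (c * r)]

lemma mul_lampertiDensity_le {α β r : ℝ} (hα : 0 ≤ α + 1) (hβ : β < α + 1) (hr : 1 ≤ r) :
    r * lampertiDensity α β r ≤
      2 ^ (α + 1) * ((α + 1 - β) / 2)⁻¹ * exp (-((α + 1 - β) / 2) * r) := by
  set c := (α + 1 - β) / 2 with hc_def
  have hc : 0 < c := by linarith
  have hden : (exp r - 1) ^ (-(α + 1)) ≤ 2 ^ (α + 1) * exp (r * -(α + 1)) := by
    rw [exp_mul]
    exact rpow_sub_one_neg_le (by linarith [add_one_le_exp r]) hα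
  have hexp : exp (c * r) * exp (β * r) * exp (r * -(α + 1)) = exp (-c * r) := by
    rw [← exp_add, ← exp_add, hc_def]
    ring_nf
  calc r * lampertiDensity α β r = r * exp (β * r) * (exp r - 1) ^ (-(α + 1)) := by
        rw [lampertiDensity, mul_assoc]
    _ ≤ c⁻¹ * exp (c * r) * exp (β * r) * (2 ^ (α + 1) * exp (r * -(α + 1))) := by
        gcongr
        exacts [rpow_nonneg (by linarith [add_one_le_exp r]) _, le_inv_mul_exp_mul hc r]
    _ = 2 ^ (α + 1) * c⁻¹ * exp (-c * r) := by
        rw [← hexp]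
        ring

lemma setIntegral_Ioi_le_of_le_exp {g : ℝ → ℝ} {C c M : ℝ} (hc : 0 < c)
    (hg₀ : ∀ r, M < r → 0 ≤ g r) (hg : ∀ r, M < r → g r ≤ C * exp (-c * r)) :
    ∫ r in Ioi M, g r ≤ C / c * exp (-c * M) :=
  calc ∫ r in Ioi M, g r ≤ ∫ r in Ioi M, C * exp (-c * r) :=
        integral_mono_of_nonneg (ae_restrict_of_forall_mem measurableSet_Ioi hg₀)
          ((integrableOn_exp_mul_Ioi (neg_neg_of_pos hc) M).const_mul C)
          (ae_restrict_of_forall_mem measurableSet_Ioi hg)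
    _ = C / c * exp (-c * M) := by
        rw [integral_const_mul, integral_exp_mul_Ioi (neg_neg_of_pos hc) M]
        field_simp

lemma tendsto_rpow_mul_exp_neg_mul_sqrt_atTop (p : ℝ) {c : ℝ} (hc : 0 < c) :
    Tendsto (fun h : ℝ => h ^ p * exp (-c * √h)) atTop (𝓝 0) := by
  refine ((tendsto_rpow_mul_exp_neg_mul_atTop_nhds_zero (2 * p) c hc).comp
    tendsto_sqrt_atTop).congr' ?_
  filter_upwards [eventually_ge_atTop 0] with h hh
  rw [Function.comp_apply, rpow_mul (sqrt_nonneg h), rpow_two, sq_sqrt hh]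

theorem tendsto_rpow_mul_setIntegral_Ioi_mul_sqrt {g : ℝ → ℝ} {C c R : ℝ} (hc : 0 < c)
    (hg₀ : ∀ r, R ≤ r → 0 ≤ g r) (hg : ∀ r, R ≤ r → g r ≤ C * exp (-c * r))
    (p : ℝ) {k : ℝ} (hk : 0 < k) :
    Tendsto (fun h : ℝ => h ^ p * ∫ r in Ioi (k * √h), g r) atTop (𝓝 0) := by
  have hlim : Tendsto (fun h : ℝ => C / c * (h ^ p * exp (-(c * k) * √h))) atTop (𝓝 0) := by
    simpa using (tendsto_rpow_mul_exp_neg_mul_sqrt_atTop p (mul_pos hc hk)).const_mul (C / c)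
  have hR : ∀ᶠ h in atTop, R ≤ k * √h :=
    (tendsto_sqrt_atTop.const_mul_atTop hk).eventually_ge_atTop R
  refine squeeze_zero' ?_ ?_ hlim
  · filter_upwards [hR, eventually_ge_atTop 0] with h hRh hh
    exact mul_nonneg (rpow_nonneg hh p)
      (setIntegral_nonneg measurableSet_Ioi fun r hr => hg₀ r (hRh.trans hr.le))
  · filter_upwards [hR, eventually_ge_atTop 0] with h hRh hh
    calc h ^ p * ∫ r in Ioi (k * √h), g r ≤ h ^ p * (C / c * exp (-c * (k * √h))) := by
          gcongr
          exact setIntegral_Ioi_le_of_le_exp hc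
            (fun r hr => hg₀ r (hRh.trans hr.le)) fun r hr => hg r (hRh.trans hr.le)
      _ = C / c * (h ^ p * exp (-(c * k) * √h)) := by
          rw [show -c * (k * √h) = -(c * k) * √h by ring]
          ring

lemma setIntegral_Ioi_mul_comp_mul_right (f : ℝ → ℝ) (k : ℝ) {s : ℝ} (hs : 0 < s) :
    ∫ r in Ioi k, r * f (r * s) = (s ^ 2)⁻¹ * ∫ u in Ioi (k * s), u * f u := by
  have hsub := integral_comp_mul_right_Ioi (fun u => u * f u) k hs
  have hr : ∀ r, r * f (r * s) = s⁻¹ * (r * s * f (r * s)) := fun r => by field_simp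
  simp only [hr, integral_const_mul, hsub, smul_eq_mul]
  ring

theorem lamperti_stable_centering_correction_vanishes
    (α β : ℝ) (hα : α ∈ Set.Ioo (0:ℝ) 2) (hβ : β < α + 1) (k : ℝ) (hk : 0 < k) :
    Filter.Tendsto
      (fun h : ℝ => h * ∫ r in Set.Ioi (k * Real.sqrt h),
        r * Real.exp (β * r) * (Real.exp r - 1) ^ (-(α + 1)))
      Filter.atTop (nhds 0) ∧
    Filter.Tendsto
      (fun h : ℝ => h ^ ((3:ℝ)/2) * ∫ r in Set.Ioi k,
        r * Real.exp (β * r * Real.sqrt h) * (Real.exp (r * Real.sqrt h) - 1) ^ (-(α + 1)))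
      Filter.atTop (nhds 0) := by
  have hc : 0 < (α + 1 - β) / 2 := by linarith
  have tail (p : ℝ) := tendsto_rpow_mul_setIntegral_Ioi_mul_sqrt hc
    (fun r hr => mul_nonneg (by linarith) (lampertiDensity_nonneg α β (by linarith)))
    (fun r hr => mul_lampertiDensity_le (by linarith [hα.1]) hβ hr) p hk
  constructor
  · simpa [lampertiDensity, mul_assoc] using tail 1
  · refine (tail (1 / 2)).congr' ?_
    filter_upwards [eventually_gt_atTop 0] with h hh
    have hs : 0 < √h := sqrt_pos.2 hh
    have hℓ (r : ℝ) : r * exp (β * r * √h) * (exp (r * √h) - 1) ^ (-(α + 1)) =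
        r * lampertiDensity α β (r * √h) := by
      rw [lampertiDensity, mul_assoc β, mul_assoc]
    simp only [hℓ]
    rw [setIntegral_Ioi_mul_comp_mul_right _ k hs, sq_sqrt hh.le,
      show (3 : ℝ) / 2 = 1 / 2 + 1 by norm_num, rpow_add_one hh.ne']
    field_simp
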